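/- For any two quantum channels Φ, Ψ from a d-dimensional system to another system, the trace distance between their Choi states satisfies (1/(2d)) D_⋄(Φ,Ψ) ≤ D_t(ω_Φ, ω_Ψ) ≤ (1/2) D_⋄(Φ,Ψ), where D_⋄ is the diamond-norm distance. -/

import Mathlib

open Matrix BigOperators Kronecker
open scoped Classical ComplexOrder

/-- Square root of a positive semidefinite matrix, as `Matrix.PosSemidef.sqrt` was defined in
Mathlib of December 2024 (since removed). -/
noncomputable def Matrix.PosSemidef.sqrt {n 𝕜 : Type*} [Fintype n] [DecidableEq n] [RCLike 𝕜]
    {A : Matrix n n 𝕜} (hA : A.PosSemidef) : Matrix n n 𝕜 :=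
  hA.1.eigenvectorUnitary.1 * diagonal ((↑) ∘ (√·) ∘ hA.1.eigenvalues) *
    (star hA.1.eigenvectorUnitary : Matrix n n 𝕜)

namespace QCap

/-- Trace norm: `‖A‖₁ = tr √(AᴴA)`. -/
noncomputable def traceNorm {ι : Type*} [Fintype ι] [DecidableEq ι] (A : Matrix ι ι ℂ) : ℝ :=
  ((Matrix.posSemidef_conjTranspose_mul_self A).sqrt.trace).re

/-- Trace distance `D_t(ρ,σ) = ‖ρ-σ‖₁ / 2`. -/
noncomputable def traceDist {ι : Type*} [Fintype ι] [DecidableEq ι] (ρ σ : Matrix ι ι ℂ) : ℝ :=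
  traceNorm (ρ - σ) / 2

/-- von Neumann entropy via eigenvalues, `H(ρ) = -∑ λᵢ log λᵢ`. -/
noncomputable def vnEntropy {ι : Type*} [Fintype ι] [DecidableEq ι] (ρ : Matrix ι ι ℂ) : ℝ :=
  if h : ρ.IsHermitian then ∑ i, Real.negMulLog (h.eigenvalues i) else 0

/-- A density operator: positive semidefinite with unit trace. -/
def IsDensity {ι : Type*} [Fintype ι] (ρ : Matrix ι ι ℂ) : Prop :=
  ρ.PosSemidef ∧ ρ.trace = 1

/-- Kraus condition `∑ Kᵢᴴ Kᵢ = 1` (trace preservation for a CP map). -/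
def IsKraus {ι κ α : Type*} [Fintype ι] [DecidableEq ι] [Fintype κ] [Fintype α]
    (K : κ → Matrix α ι ℂ) : Prop :=
  ∑ k, (K k)ᴴ * K k = 1

/-- Channel action `Φ(ρ) = ∑ Kᵢ ρ Kᵢᴴ`. -/
noncomputable def channelApply {ι κ α : Type*} [Fintype ι] [Fintype κ]
    (K : κ → Matrix α ι ℂ) (ρ : Matrix ι ι ℂ) : Matrix α α ℂ :=
  ∑ k, K k * ρ * (K k)ᴴ

/-- Choi state `ω_Φ = (Φ ⊗ id)(|ω⟩⟨ω|)` with `|ω⟩ = (1/√d) ∑ᵢ |ii⟩`. -/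
noncomputable def choiState {ι κ α : Type*} [Fintype ι] [DecidableEq ι] [Fintype κ]
    (K : κ → Matrix α ι ℂ) : Matrix (α × ι) (α × ι) ℂ :=
  (Fintype.card ι : ℂ)⁻¹ •
    ∑ i : ι, ∑ j : ι,
      (channelApply K (Matrix.single i j 1)) ⊗ₖ (Matrix.single i j 1)

/-- Partial trace over the first tensor factor. -/
noncomputable def ptraceFst {α β : Type*} [Fintype α]
    (M : Matrix (α × β) (α × β) ℂ) : Matrix β β ℂ :=
  Matrix.of fun i j => ∑ a, M (a, i) (a, j)

/-- Partial trace over the second tensor factor. -/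
noncomputable def ptraceSnd {α β : Type*} [Fintype β]
    (M : Matrix (α × β) (α × β) ℂ) : Matrix α α ℂ :=
  Matrix.of fun a b => ∑ i, M (a, i) (b, i)

/-- Fidelity `F(ρ,σ) = (tr √(√ρ σ √ρ))²`. -/
noncomputable def fidelity {ι : Type*} [Fintype ι] [DecidableEq ι] (ρ σ : Matrix ι ι ℂ) : ℝ :=
  if hρ : ρ.PosSemidef then
    if h : (hρ.sqrt * σ * hρ.sqrt).PosSemidef then ((h.sqrt.trace).re) ^ 2 else 0
  else 0

/-- Coherent information of the channel at the maximally mixed input: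
`I(Φ) = H(Φ(π_d)) - H(ω_Φ)`. -/
noncomputable def cohInfo {ι κ α : Type*} [Fintype ι] [DecidableEq ι] [Fintype κ]
    [Fintype α] [DecidableEq α] (K : κ → Matrix α ι ℂ) : ℝ :=
  vnEntropy (channelApply K ((Fintype.card ι : ℂ)⁻¹ • (1 : Matrix ι ι ℂ)))
    - vnEntropy (choiState K)

end QCap

namespace QCap
open Matrix Kronecker

/-- `(Φ ⊗ id)` acting on a state of the input system tensored with an ancilla copy. -/
noncomputable def extApply {ι κ α : Type*} [Fintype ι] [DecidableEq ι] [Fintype κ]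
    (K : κ → Matrix α ι ℂ) (M : Matrix (ι × ι) (ι × ι) ℂ) : Matrix (α × ι) (α × ι) ℂ :=
  ∑ k, (K k ⊗ₖ (1 : Matrix ι ι ℂ)) * M * (K k ⊗ₖ (1 : Matrix ι ι ℂ))ᴴ

/-- Diamond-norm distance: supremum over states on the extended system of the
trace norm of the difference of the extended outputs. -/
noncomputable def diamondDist {ι κ κ' α : Type*} [Fintype ι] [DecidableEq ι]
    [Fintype κ] [Fintype κ'] [Fintype α] [DecidableEq α]
    (K : κ → Matrix α ι ℂ) (L : κ' → Matrix α ι ℂ) : ℝ :=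
  sSup {x | ∃ M : Matrix (ι × ι) (ι × ι) ℂ, IsDensity M ∧
    x = traceNorm (extApply K M - extApply L M)}

end QCap

/-!
The Choi state is the image of the maximally entangled state under `Φ ⊗ id`, which gives the
upper bound `D_t(ω_Φ, ω_Ψ) ≤ D_⋄(Φ, Ψ) / 2`. Conversely, every unit vector of the extended system
is `vec R = (1 ⊗ R) vec 1` for a matrix `R` with `‖R‖ ≤ ‖vec R‖₂ = 1`, so `Φ ⊗ id` maps its
projector to `d (1 ⊗ R) ω_Φ (1 ⊗ R)ᴴ`. The trace norm is dual to the operator norm, hence convex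
and non-increasing under conjugation by contractions; decomposing a state into its eigenvectors
then gives `‖(Φ ⊗ id - Ψ ⊗ id)(ρ)‖₁ ≤ d ‖ω_Φ - ω_Ψ‖₁`.
-/

namespace Matrix

section L2OpNorm

open scoped Matrix.Norms.L2Operator

variable {𝕜 l m n : Type*} [RCLike 𝕜] [Fintype l] [Fintype m] [Fintype n]

theorem sum_norm_mulVec_sq_le (A : Matrix m n 𝕜) (x : n → 𝕜) :
    ∑ i, ‖(A *ᵥ x) i‖ ^ 2 ≤ ‖A‖ ^ 2 * ∑ j, ‖x j‖ ^ 2 := by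
  have h := A.l2_opNorm_mulVec (WithLp.toLp 2 x)
  rwa [← sq_le_sq₀ (norm_nonneg _) (by positivity), mul_pow, EuclideanSpace.norm_sq_eq,
    EuclideanSpace.norm_sq_eq] at h

theorem l2_opNorm_le_of_sum_norm_mulVec_sq_le {A : Matrix m n 𝕜} {c : ℝ} (hc : 0 ≤ c)
    (h : ∀ x, ∑ i, ‖(A *ᵥ x) i‖ ^ 2 ≤ c ^ 2 * ∑ j, ‖x j‖ ^ 2) : ‖A‖ ≤ c := by
  rw [l2_opNorm_def]
  refine ContinuousLinearMap.opNorm_le_bound _ hc fun x => ?_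
  rw [← sq_le_sq₀ (norm_nonneg _) (by positivity), mul_pow, EuclideanSpace.norm_sq_eq,
    EuclideanSpace.norm_sq_eq]
  exact h x

theorem norm_apply_le_l2_opNorm [DecidableEq n] (A : Matrix m n 𝕜) (i : m) (j : n) :
    ‖A i j‖ ≤ ‖A‖ := by
  have hunit : ∑ k, ‖(Pi.single j 1 : n → 𝕜) k‖ ^ 2 = 1 := by
    rw [Fintype.sum_eq_single j fun k hk => by simp [hk]]
    simp
  have hcol := sum_norm_mulVec_sq_le A (Pi.single j 1)
  rw [hunit, mul_one, mulVec_single_one] at hcol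
  refine (pow_le_pow_iff_left₀ (norm_nonneg _) (norm_nonneg _) two_ne_zero).1 (le_trans ?_ hcol)
  exact Finset.single_le_sum (f := fun k => ‖A k j‖ ^ 2) (fun _ _ => by positivity)
    (Finset.mem_univ i)

theorem l2_opNorm_le_norm_vec (A : Matrix m n 𝕜) : ‖A‖ ≤ ‖WithLp.toLp 2 (vec A)‖ := by
  refine l2_opNorm_le_of_sum_norm_mulVec_sq_le (norm_nonneg _) fun x => ?_
  rw [EuclideanSpace.norm_sq_eq, Fintype.sum_prod_type, Finset.sum_comm, Finset.sum_mul]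
  gcongr with i
  calc ‖(A *ᵥ x) i‖ ^ 2 ≤ (∑ j, ‖A i j‖ * ‖x j‖) ^ 2 := by
        gcongr
        exact (norm_sum_le _ _).trans_eq (by simp [norm_mul])
    _ ≤ (∑ j, ‖A i j‖ ^ 2) * ∑ j, ‖x j‖ ^ 2 := by
        simpa only [mul_pow] using
          Finset.sum_mul_sq_le_sq_mul_sq _ (fun j => ‖A i j‖) (fun j => ‖x j‖)

theorem l2_opNorm_one_kronecker_le [DecidableEq l] (R : Matrix m n 𝕜) :
    ‖(1 : Matrix l l 𝕜) ⊗ₖ R‖ ≤ ‖R‖ := by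
  refine l2_opNorm_le_of_sum_norm_mulVec_sq_le (norm_nonneg R) fun x => ?_
  obtain ⟨X, rfl⟩ := vec_bijective.surjective x
  have hcol : ∀ a, ∑ i, ‖(R * X) i a‖ ^ 2 ≤ ‖R‖ ^ 2 * ∑ j, ‖X j a‖ ^ 2 := fun a =>
    sum_norm_mulVec_sq_le R (fun j => X j a)
  simpa only [← vec_mul_eq_mulVec, vec, Fintype.sum_prod_type, Finset.mul_sum] using
    Finset.sum_le_sum fun a _ => hcol a

end L2OpNorm

theorem vecMulVec_mulVec_star {m n : Type*} [Fintype n] (A : Matrix m n ℂ) (x : n → ℂ) :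
    vecMulVec (A *ᵥ x) (star (A *ᵥ x)) = A * vecMulVec x (star x) * Aᴴ := by
  rw [mul_vecMulVec, vecMulVec_mul, star_mulVec]

section Spectral

variable {n : Type*} [Fintype n] [DecidableEq n]

open scoped MatrixOrder in
theorem PosSemidef.sqrt_eq_cfcSqrt {A : Matrix n n ℂ} (hA : A.PosSemidef) :
    hA.sqrt = CFC.sqrt A := by
  rw [CFC.sqrt_eq_cfc, cfc_nnreal_eq_real _ A hA.nonneg, hA.1.cfc_eq]
  simp only [Matrix.PosSemidef.sqrt, IsHermitian.cfc, Unitary.conjStarAlgAut_apply]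
  congr 3
  funext i
  simp [Real.coe_sqrt, Real.coe_toNNReal', max_eq_left (hA.eigenvalues_nonneg i)]

theorem IsHermitian.trace_cfc {A : Matrix n n ℂ} (hA : A.IsHermitian) (f : ℝ → ℝ) :
    (hA.cfc f).trace = ∑ i, (f (hA.eigenvalues i) : ℂ) := by
  rw [IsHermitian.cfc, Unitary.conjStarAlgAut_apply, trace_mul_cycle, Unitary.coe_star_mul_self,
    one_mul, trace_diagonal]
  rfl

theorem IsHermitian.trace_mul_eq_sum {A : Matrix n n ℂ} (hA : A.IsHermitian) (C : Matrix n n ℂ) :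
    (C * A).trace = ∑ i, (star (hA.eigenvectorUnitary : Matrix n n ℂ) * C *
      hA.eigenvectorUnitary) i i * hA.eigenvalues i := by
  conv_lhs => rw [hA.spectral_theorem, Unitary.conjStarAlgAut_apply]
  rw [← Matrix.mul_assoc, ← Matrix.mul_assoc, trace_mul_cycle, ← Matrix.mul_assoc, trace]
  simp [mul_diagonal]

theorem IsHermitian.eq_sum_eigenvalues_smul_vecMulVec {𝕜 : Type*} [RCLike 𝕜] {A : Matrix n n 𝕜}
    (hA : A.IsHermitian) :
    A = ∑ i, (hA.eigenvalues i : 𝕜) •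
      vecMulVec ⇑(hA.eigenvectorBasis i) (star ⇑(hA.eigenvectorBasis i)) := by
  conv_lhs => rw [hA.spectral_theorem, Unitary.conjStarAlgAut_apply]
  ext j k
  rw [mul_apply, Matrix.sum_apply]
  refine Finset.sum_congr rfl fun i _ => ?_
  simp only [mul_diagonal, smul_apply, vecMulVec_apply, smul_eq_mul,
    IsHermitian.eigenvectorUnitary_apply, star_apply, Pi.star_apply, Function.comp_apply]
  ring

end Spectral

end Matrix

namespace QCap

section TraceNorm

open scoped Matrix.Norms.L2Operator

variable {m n : Type*} [Fintype m] [DecidableEq m] [Fintype n] [DecidableEq n]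

open scoped MatrixOrder in
theorem traceNorm_eq_re_trace_abs (A : Matrix n n ℂ) : traceNorm A = (CFC.abs A).trace.re := by
  rw [traceNorm, PosSemidef.sqrt_eq_cfcSqrt, CFC.abs, star_eq_conjTranspose]

open scoped MatrixOrder in
theorem traceNorm_nonneg (A : Matrix n n ℂ) : 0 ≤ traceNorm A := by
  rw [traceNorm_eq_re_trace_abs]
  exact Complex.nonneg_iff.1 ((nonneg_iff_posSemidef.1 (CFC.abs_nonneg A)).trace_nonneg) |>.1

open scoped MatrixOrder in
theorem traceNorm_eq_sum_abs_eigenvalues {A : Matrix n n ℂ} (hA : A.IsHermitian) :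
    traceNorm A = ∑ i, |hA.eigenvalues i| := by
  rw [traceNorm_eq_re_trace_abs, CFC.abs_eq_cfc_norm A hA.isSelfAdjoint, hA.cfc_eq, hA.trace_cfc,
    Complex.re_sum]
  simp

theorem re_trace_mul_le_norm_mul_traceNorm {A : Matrix n n ℂ} (hA : A.IsHermitian)
    (C : Matrix n n ℂ) :
    (C * A).trace.re ≤ ‖C‖ * traceNorm A := by
  set U : Matrix n n ℂ := ↑hA.eigenvectorUnitary
  have hU : U ∈ unitary (Matrix n n ℂ) := hA.eigenvectorUnitary.2
  have hdiag : ∀ i, ‖(star U * C * U) i i‖ ≤ ‖C‖ := fun i => by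
    refine (norm_apply_le_l2_opNorm _ i i).trans_eq ?_
    rw [CStarRing.norm_mul_mem_unitary _ hU, CStarRing.norm_mem_unitary_mul _ (Unitary.star_mem hU)]
  rw [hA.trace_mul_eq_sum, Complex.re_sum, traceNorm_eq_sum_abs_eigenvalues hA, Finset.mul_sum]
  gcongr with i
  calc ((star U * C * U) i i * hA.eigenvalues i).re
      ≤ ‖(star U * C * U) i i * hA.eigenvalues i‖ := Complex.re_le_norm _
    _ = ‖(star U * C * U) i i‖ * |hA.eigenvalues i| := by simp
    _ ≤ ‖C‖ * |hA.eigenvalues i| := by gcongr; exact hdiag i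

theorem exists_re_trace_mul_eq_traceNorm {A : Matrix n n ℂ} (hA : A.IsHermitian) :
    ∃ C : Matrix n n ℂ, ‖C‖ ≤ 1 ∧ (C * A).trace.re = traceNorm A := by
  set U : Matrix n n ℂ := ↑hA.eigenvectorUnitary
  have hU : U ∈ unitary (Matrix n n ℂ) := hA.eigenvectorUnitary.2
  set s : n → ℂ := fun i => if 0 ≤ hA.eigenvalues i then 1 else -1
  refine ⟨U * diagonal s * star U, ?_, ?_⟩
  · rw [CStarRing.norm_mul_mem_unitary _ (Unitary.star_mem hU), CStarRing.norm_mem_unitary_mul _ hU,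
      l2_opNorm_diagonal]
    refine pi_norm_le_iff_of_nonneg zero_le_one |>.2 fun i => ?_
    by_cases hi : 0 ≤ hA.eigenvalues i <;> simp [s, hi]
  · have hconj : star U * (U * diagonal s * star U) * U = diagonal s := by
      simp only [← Matrix.mul_assoc, Unitary.star_mul_self_of_mem hU, Matrix.one_mul]
      rw [Matrix.mul_assoc, Unitary.star_mul_self_of_mem hU, Matrix.mul_one]
    rw [hA.trace_mul_eq_sum, hconj, Complex.re_sum, traceNorm_eq_sum_abs_eigenvalues hA]
    refine Finset.sum_congr rfl fun i _ => ?_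
    by_cases hi : 0 ≤ hA.eigenvalues i
    · simp [s, hi, abs_of_nonneg hi]
    · simp [s, hi, abs_of_neg (not_le.1 hi)]

theorem traceNorm_sum_smul_le {p : Type*} [Fintype p] {c : p → ℝ} (hc : ∀ i, 0 ≤ c i)
    {A : p → Matrix n n ℂ} (hA : ∀ i, (A i).IsHermitian) :
    traceNorm (∑ i, (c i : ℂ) • A i) ≤ ∑ i, c i * traceNorm (A i) := by
  have hsum : (∑ i, (c i : ℂ) • A i).IsHermitian :=
    isSelfAdjoint_sum _ fun i _ => IsSelfAdjoint.smul (Complex.conj_ofReal (c i)) (hA i)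
  obtain ⟨C, hC, hCsum⟩ := exists_re_trace_mul_eq_traceNorm hsum
  rw [← hCsum, Matrix.mul_sum, trace_sum, Complex.re_sum]
  gcongr with i
  rw [Matrix.mul_smul, trace_smul, smul_eq_mul, Complex.re_ofReal_mul]
  gcongr
  · exact hc i
  · exact (re_trace_mul_le_norm_mul_traceNorm (hA i) C).trans
      (mul_le_of_le_one_left (traceNorm_nonneg _) hC)

theorem traceNorm_mul_mul_conjTranspose_le {A : Matrix n n ℂ} (hA : A.IsHermitian)
    {R : Matrix m n ℂ} (hR : ‖R‖ ≤ 1) : traceNorm (R * A * Rᴴ) ≤ traceNorm A := by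
  obtain ⟨C, hC, hCeq⟩ :=
    exists_re_trace_mul_eq_traceNorm (isHermitian_mul_mul_conjTranspose R hA)
  have hnorm : ‖Rᴴ * C * R‖ ≤ 1 := by
    calc ‖Rᴴ * C * R‖ ≤ ‖Rᴴ‖ * ‖C‖ * ‖R‖ :=
          (l2_opNorm_mul _ _).trans (by gcongr; exact l2_opNorm_mul _ _)
      _ ≤ 1 * 1 * 1 := by rw [l2_opNorm_conjTranspose]; gcongr
      _ = 1 := by ring
  calc traceNorm (R * A * Rᴴ) = ((Rᴴ * C * R) * A).trace.re := by
        rw [← hCeq, Matrix.mul_assoc Rᴴ, Matrix.mul_assoc Rᴴ, trace_mul_comm Rᴴ]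
        simp only [Matrix.mul_assoc]
    _ ≤ ‖Rᴴ * C * R‖ * traceNorm A := re_trace_mul_le_norm_mul_traceNorm hA _
    _ ≤ traceNorm A := mul_le_of_le_one_left (traceNorm_nonneg A) hnorm

end TraceNorm

section Channel

variable {ι κ α : Type*} [Fintype ι] [DecidableEq ι] [Fintype κ]

theorem extApply_sum {p : Type*} [Fintype p] (K : κ → Matrix α ι ℂ)
    (M : p → Matrix (ι × ι) (ι × ι) ℂ) : extApply K (∑ i, M i) = ∑ i, extApply K (M i) := by
  simp only [extApply, Matrix.mul_sum, Matrix.sum_mul]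
  exact Finset.sum_comm

theorem extApply_smul (K : κ → Matrix α ι ℂ) (c : ℂ) (M : Matrix (ι × ι) (ι × ι) ℂ) :
    extApply K (c • M) = c • extApply K M := by
  simp only [extApply, Matrix.mul_smul, Matrix.smul_mul, Finset.smul_sum]

theorem extApply_posSemidef [Fintype α] (K : κ → Matrix α ι ℂ) {M : Matrix (ι × ι) (ι × ι) ℂ}
    (hM : M.PosSemidef) : (extApply K M).PosSemidef :=
  posSemidef_sum _ fun _ _ => hM.mul_mul_conjTranspose_same _

theorem extApply_kronecker (K : κ → Matrix α ι ℂ) (A B : Matrix ι ι ℂ) :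
    extApply K (A ⊗ₖ B) = channelApply K A ⊗ₖ B := by
  simp only [extApply, channelApply, conjTranspose_kronecker, conjTranspose_one,
    ← mul_kronecker_mul, Matrix.mul_one]
  ext ⟨a, i⟩ ⟨b, j⟩
  simp [Matrix.sum_apply, Finset.sum_mul]

theorem extApply_one_kronecker_conj [Fintype α] [DecidableEq α] (K : κ → Matrix α ι ℂ)
    (R : Matrix ι ι ℂ) (M : Matrix (ι × ι) (ι × ι) ℂ) :
    extApply K (((1 : Matrix ι ι ℂ) ⊗ₖ R) * M * ((1 : Matrix ι ι ℂ) ⊗ₖ R)ᴴ) =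
      ((1 : Matrix α α ℂ) ⊗ₖ R) * extApply K M * ((1 : Matrix α α ℂ) ⊗ₖ R)ᴴ := by
  set P := (1 : Matrix ι ι ℂ) ⊗ₖ R
  set Q := (1 : Matrix α α ℂ) ⊗ₖ R
  simp only [extApply, Matrix.mul_sum, Matrix.sum_mul]
  refine Finset.sum_congr rfl fun k _ => ?_
  set T := K k ⊗ₖ (1 : Matrix ι ι ℂ)
  have hcomm : T * P = Q * T := by
    simp only [T, P, Q, ← mul_kronecker_mul, Matrix.mul_one, Matrix.one_mul]
  have hcomm' : Pᴴ * Tᴴ = Tᴴ * Qᴴ := by rw [← conjTranspose_mul, hcomm, conjTranspose_mul]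
  calc T * (P * M * Pᴴ) * Tᴴ = (T * P) * M * (Pᴴ * Tᴴ) := by simp only [Matrix.mul_assoc]
    _ = (Q * T) * M * (Tᴴ * Qᴴ) := by rw [hcomm, hcomm']
    _ = Q * (T * M * Tᴴ) * Qᴴ := by simp only [Matrix.mul_assoc]

variable (ι) in
/-- Since `vec 1 = ∑ᵢ |i⟩ ⊗ |i⟩`, this is the projector onto `|ω⟩ = d^{-1/2} ∑ᵢ |ii⟩`. -/
noncomputable def maxEntangled : Matrix (ι × ι) (ι × ι) ℂ :=
  (Fintype.card ι : ℂ)⁻¹ • vecMulVec (vec (1 : Matrix ι ι ℂ)) (star (vec 1))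

theorem sum_single_kronecker_single :
    ∑ i : ι, ∑ j : ι, single i j (1 : ℂ) ⊗ₖ single i j (1 : ℂ) =
      vecMulVec (vec (1 : Matrix ι ι ℂ)) (star (vec 1)) := by
  ext ⟨a, b⟩ ⟨c, e⟩
  by_cases hab : b = a <;> by_cases hce : e = c <;>
    simp [Matrix.sum_apply, single_apply, vecMulVec_apply, one_apply, hab, hce, ite_and]

theorem choiState_eq_extApply (K : κ → Matrix α ι ℂ) :
    choiState K = extApply K (maxEntangled ι) := by
  rw [maxEntangled, extApply_smul, ← sum_single_kronecker_single, choiState]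
  simp only [extApply_sum, extApply_kronecker]

theorem isDensity_maxEntangled [Nonempty ι] : IsDensity (maxEntangled ι) := by
  have hd : (Fintype.card ι : ℂ) ≠ 0 := Nat.cast_ne_zero.2 Fintype.card_ne_zero
  refine ⟨(posSemidef_vecMulVec_self_star _).smul ?_, ?_⟩
  · simp
  · rw [maxEntangled, trace_smul, trace_vecMulVec, smul_eq_mul, inv_mul_eq_one₀ hd]
    simp [dotProduct, Fintype.sum_prod_type, one_apply]

theorem posSemidef_choiState [Fintype α] [Nonempty ι] (K : κ → Matrix α ι ℂ) :
    (choiState K).PosSemidef := by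
  rw [choiState_eq_extApply]
  exact extApply_posSemidef K isDensity_maxEntangled.1

theorem extApply_vecMulVec_vec [Fintype α] [DecidableEq α] [Nonempty ι] (K : κ → Matrix α ι ℂ)
    (R : Matrix ι ι ℂ) :
    extApply K (vecMulVec (vec R) (star (vec R))) =
      (Fintype.card ι : ℂ) •
        (((1 : Matrix α α ℂ) ⊗ₖ R) * choiState K * ((1 : Matrix α α ℂ) ⊗ₖ R)ᴴ) := by
  have hd : (Fintype.card ι : ℂ) ≠ 0 := Nat.cast_ne_zero.2 Fintype.card_ne_zero
  have hvec : vec R = ((1 : Matrix ι ι ℂ) ⊗ₖ R) *ᵥ vec 1 := by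
    rw [← vec_mul_eq_mulVec, Matrix.mul_one]
  rw [hvec, vecMulVec_mulVec_star, extApply_one_kronecker_conj, choiState_eq_extApply,
    maxEntangled, extApply_smul, Matrix.mul_smul, Matrix.smul_mul, smul_smul, mul_inv_cancel₀ hd,
    one_smul]

end Channel

section Choi

open scoped Matrix.Norms.L2Operator

variable {ι κ κ' α : Type*} [Fintype ι] [DecidableEq ι] [Nonempty ι] [Fintype κ] [Fintype κ']
  [Fintype α] [DecidableEq α]

theorem traceNorm_extApply_sub_le (K : κ → Matrix α ι ℂ) (L : κ' → Matrix α ι ℂ)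
    {M : Matrix (ι × ι) (ι × ι) ℂ} (hM : IsDensity M) :
    traceNorm (extApply K M - extApply L M) ≤
      Fintype.card ι * traceNorm (choiState K - choiState L) := by
  set d : ℝ := (Fintype.card ι : ℝ)
  set Y := choiState K - choiState L
  have hY : Y.IsHermitian := (posSemidef_choiState K).1.sub (posSemidef_choiState L).1
  have hMh : M.IsHermitian := hM.1.1
  set b := hMh.eigenvectorBasis
  choose R hR using fun i => vec_bijective.surjective ⇑(b i)
  have hRnorm : ∀ i, ‖(1 : Matrix α α ℂ) ⊗ₖ R i‖ ≤ 1 := fun i =>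
    calc ‖(1 : Matrix α α ℂ) ⊗ₖ R i‖ ≤ ‖R i‖ := l2_opNorm_one_kronecker_le (R i)
      _ ≤ ‖WithLp.toLp 2 (vec (R i))‖ := l2_opNorm_le_norm_vec (R i)
      _ = 1 := by rw [hR i]; exact b.orthonormal.1 i
  have hdecomp : extApply K M - extApply L M = ∑ i, ((hMh.eigenvalues i * d : ℝ) : ℂ) •
      (((1 : Matrix α α ℂ) ⊗ₖ R i) * Y * ((1 : Matrix α α ℂ) ⊗ₖ R i)ᴴ) := by
    conv_lhs => rw [hMh.eq_sum_eigenvalues_smul_vecMulVec]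
    rw [extApply_sum, extApply_sum, ← Finset.sum_sub_distrib]
    refine Finset.sum_congr rfl fun i _ => ?_
    rw [extApply_smul, extApply_smul, ← smul_sub, ← hR i, extApply_vecMulVec_vec,
      extApply_vecMulVec_vec, ← smul_sub, smul_smul, ← Matrix.sub_mul, ← Matrix.mul_sub]
    simp only [d, Y, Complex.ofReal_mul, Complex.ofReal_natCast]
    rfl
  have hsum : ∑ i, hMh.eigenvalues i = 1 := by
    have h := congrArg Complex.re (hMh.trace_eq_sum_eigenvalues.symm.trans hM.2)
    simpa [Complex.re_sum] using h
  calc traceNorm (extApply K M - extApply L M)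
      ≤ ∑ i, hMh.eigenvalues i * d *
          traceNorm (((1 : Matrix α α ℂ) ⊗ₖ R i) * Y * ((1 : Matrix α α ℂ) ⊗ₖ R i)ᴴ) := by
        rw [hdecomp]
        exact traceNorm_sum_smul_le
          (fun i => mul_nonneg (hM.1.eigenvalues_nonneg i) (by positivity))
          fun i => isHermitian_mul_mul_conjTranspose _ hY
    _ ≤ ∑ i, hMh.eigenvalues i * d * traceNorm Y := by
        gcongr with i
        · exact mul_nonneg (hM.1.eigenvalues_nonneg i) (by positivity)
        · exact traceNorm_mul_mul_conjTranspose_le hY (hRnorm i)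
    _ = d * traceNorm Y := by rw [← Finset.sum_mul, ← Finset.sum_mul, hsum, one_mul]

theorem diamondDist_le_card_mul_traceNorm (K : κ → Matrix α ι ℂ) (L : κ' → Matrix α ι ℂ) :
    diamondDist K L ≤ Fintype.card ι * traceNorm (choiState K - choiState L) :=
  csSup_le ⟨_, maxEntangled ι, isDensity_maxEntangled, rfl⟩ <| by
    rintro _ ⟨M, hM, rfl⟩
    exact traceNorm_extApply_sub_le K L hM

theorem traceNorm_choiState_sub_le_diamondDist (K : κ → Matrix α ι ℂ) (L : κ' → Matrix α ι ℂ) :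
    traceNorm (choiState K - choiState L) ≤ diamondDist K L := by
  have hbdd : BddAbove {x | ∃ M, IsDensity M ∧ x = traceNorm (extApply K M - extApply L M)} :=
    ⟨_, by rintro _ ⟨M, hM, rfl⟩; exact traceNorm_extApply_sub_le K L hM⟩
  rw [choiState_eq_extApply, choiState_eq_extApply]
  exact le_csSup hbdd ⟨maxEntangled ι, isDensity_maxEntangled, rfl⟩

end Choi

end QCap

open QCap Matrix in
theorem diamond_vs_choi_general {ι κ κ' α : Type*} [Fintype ι] [DecidableEq ι] [Nonempty ι]
    [Fintype κ] [Fintype κ'] [Fintype α] [DecidableEq α]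
    (K : κ → Matrix α ι ℂ) (L : κ' → Matrix α ι ℂ) :
    (2 * (Fintype.card ι : ℝ))⁻¹ * diamondDist K L ≤ traceDist (choiState K) (choiState L) ∧
      traceDist (choiState K) (choiState L) ≤ (1 / 2) * diamondDist K L := by
  have hd : (0 : ℝ) < Fintype.card ι := Nat.cast_pos.2 Fintype.card_pos
  have hlower := diamondDist_le_card_mul_traceNorm K L
  have hupper := traceNorm_choiState_sub_le_diamondDist K L
  rw [traceDist]
  constructor
  · calc (2 * (Fintype.card ι : ℝ))⁻¹ * diamondDist K L
        ≤ (2 * (Fintype.card ι : ℝ))⁻¹ *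
            (Fintype.card ι * traceNorm (choiState K - choiState L)) := by gcongr
      _ = traceNorm (choiState K - choiState L) / 2 := by field_simp
  · linarith

open QCap Matrix in
/-- relation between the diamond distance of two channels and the
trace distance of their Choi states. -/
theorem diamond_vs_choi {ι κ κ' α : Type*} [Fintype ι] [DecidableEq ι] [Nonempty ι]
    [Fintype κ] [Fintype κ'] [Fintype α] [DecidableEq α]
    (K : κ → Matrix α ι ℂ) (L : κ' → Matrix α ι ℂ) (hK : IsKraus K) (hL : IsKraus L) :
    (2 * (Fintype.card ι : ℝ))⁻¹ * diamondDist K L ≤ traceDist (choiState K) (choiState L) ∧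
      traceDist (choiState K) (choiState L) ≤ (1 / 2) * diamondDist K L :=
  diamond_vs_choi_general K L
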